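/- Let 𝔟 ≥ 1 and let Y ⊆ 𝔟^ℤ be the subshift of finite type described by forbidden patterns p_1,…,p_k, all of length L. Then there exists a Borel equivariant map from F(2^ℤ) to Y if and only if there exist integers n, p, q with L ≤ n < p, q and gcd(p,q) = 1, and elements y_1, y_2 ∈ Y such that y_1(m+p) = y_1(m) for all m ∈ ℤ, y_2(m+q) = y_2(m) for all m ∈ ℤ, and y_1(i) = y_2(i) for all 0 ≤ i < n. -/

import Mathlib

/-- The shift action of `ℤ` on `α^ℤ`: `(s · x)(n) = x(n + s)`. -/
def shift {α : Type*} (s : ℤ) (x : ℤ → α) : ℤ → α := fun n => x (n + s)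

/-- The free part `F(2^ℤ)` of the shift action on `2^ℤ = (ℤ → Bool)`. -/
def FreePart : Set (ℤ → Bool) := {x | ∀ s : ℤ, s ≠ 0 → shift s x ≠ x}

/-- The pattern `p` (of length `L`) occurs in `y ∈ b^ℤ`. -/
def Occurs {b L : ℕ} (p : Fin L → Fin b) (y : ℤ → Fin b) : Prop :=
  ∃ m : ℤ, ∀ i : Fin L, y (m + (i : ℤ)) = p i

/-- The subshift of finite type described by `(b; P 0, …, P (k-1))`:
the set of points of `b^ℤ` in which none of the forbidden patterns occurs. -/
def SFT {b L k : ℕ} (P : Fin k → Fin L → Fin b) : Set (ℤ → Fin b) :=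
  {y | ∀ j : Fin k, ¬ Occurs (P j) y}

/-- `f : F(2^ℤ) → Y` is equivariant: `f(s · x) = s · f(x)`. -/
def EquivariantOn {b : ℕ} (Y : Set (ℤ → Fin b))
    (f : {x : ℤ → Bool // x ∈ FreePart} → {y : ℤ → Fin b // y ∈ Y}) : Prop :=
  ∀ (x : {x : ℤ → Bool // x ∈ FreePart}) (s : ℤ) (h : shift s x.1 ∈ FreePart),
    (f ⟨shift s x.1, h⟩ : ℤ → Fin b) = shift s (f x : ℤ → Fin b)

/-!
Given the periodic points, choose (greedily along an enumeration of cylinders) a Borel set of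
markers whose consecutive gaps all exceed `p q`. Every integer `≥ p q` is a combination
`k₁ p + k₂ q` with `k₁, k₂ ≥ 0`, so each gap can be filled with `k₁` periods of `y₁` followed by
`k₂` periods of `y₂`. As `y₁` and `y₂` begin with the same `n ≥ L` letters, every window of
length `L` of the result is a window of `y₁` or of `y₂`, hence allowed.

Conversely, compose a Borel equivariant map with the coding of an irrational rotation of the
circle, which is free almost everywhere. Some word `u` of length `L` is read at `0` on a set of
positive measure, and ergodicity of the rotation by `d • α` makes this set return to itself at
times in every residue class modulo `d`. Each return time `t` yields a `|t|`-periodic point of `Y`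
beginning with `u`; an odd return time `t₁` and one `t₂ ≡ 1 mod 2 p`, where `p = (L + 1) |t₁|`,
give the two coprime periods.
-/

open MeasureTheory Function

section Shift

variable {α : Type*}

theorem shift_shift (s t : ℤ) (x : ℤ → α) : shift s (shift t x) = shift (s + t) x := by
  funext n
  simp only [shift, add_assoc]

theorem shift_zero (x : ℤ → α) : shift 0 x = x := by
  funext n
  simp only [shift, add_zero]

theorem shift_injective (s : ℤ) : Injective (shift s : (ℤ → α) → ℤ → α) := fun x y h => by
  simpa only [shift_shift, neg_add_cancel, shift_zero] using congrArg (shift (-s)) h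

theorem measurable_shift [MeasurableSpace α] (s : ℤ) : Measurable (shift s : (ℤ → α) → ℤ → α) :=
  measurable_pi_lambda _ fun n => measurable_pi_apply (n + s)

theorem shift_mem_freePart_iff {x : ℤ → Bool} (s : ℤ) : shift s x ∈ FreePart ↔ x ∈ FreePart := by
  have h : ∀ t, shift t (shift s x) = shift s x ↔ shift t x = x := fun t => by
    rw [shift_shift, add_comm, ← shift_shift, (shift_injective s).eq_iff]
  simp only [FreePart, Set.mem_ofPred_eq, ne_eq, h]

theorem measurableSet_freePart : MeasurableSet FreePart := by
  simp only [FreePart, ne_eq, Set.ofPred_forall]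
  exact .iInter fun s => .iInter fun _ =>
    (measurableSet_eq_fun (measurable_shift s) measurable_id).compl

end Shift

section SFT

variable {b L k : ℕ} {P : Fin k → Fin L → Fin b}

theorem shift_mem_SFT {y : ℤ → Fin b} (hy : y ∈ SFT P) (s : ℤ) : shift s y ∈ SFT P :=
  fun j ⟨m, hm⟩ => hy j ⟨m + s, fun i => by rw [add_right_comm]; exact hm i⟩

theorem mem_SFT_of_forall_window {z : ℤ → Fin b}
    (h : ∀ m : ℤ, ∃ y ∈ SFT P, ∃ c : ℤ, ∀ i : Fin L, z (m + i) = y (c + i)) : z ∈ SFT P := by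
  rintro j ⟨m, hm⟩
  obtain ⟨y, hy, c, hc⟩ := h m
  exact hy j ⟨c, fun i => (hc i).symm.trans (hm i)⟩

theorem apply_eq_apply_emod_of_agree {α : Type*} {y : ℤ → α} {t : ℤ} (ht : 0 < t)
    (h : ∀ i : ℕ, i < L → y (t + i) = y i) (s : ℤ) (hs₀ : 0 ≤ s) (hs : s < t + L) :
    y s = y (s % t) := by
  lift s to ℕ using hs₀
  induction s using Nat.strong_induction_on with
  | _ s ih =>
    rcases lt_or_ge (s : ℤ) t with hst | hts
    · rw [Int.emod_eq_of_lt (Int.natCast_nonneg s) hst]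
    · obtain ⟨j, hj⟩ : ∃ j : ℕ, (s : ℤ) = t + j := ⟨(s - t).toNat, by omega⟩
      rw [hj, h j (by omega), ih j (by omega) (by omega), Int.add_emod_left]

/-- Closing lemma, with `z m = y (m % t)`: every window of length `L` of `z` is one of `y`,
because `y` repeats its first `L` letters at `t`. -/
theorem exists_periodic_of_agree {y : ℤ → Fin b} (hy : y ∈ SFT P) {t : ℤ} (ht : 0 < t)
    (h : ∀ i : Fin L, y (t + i) = y i) :
    ∃ z ∈ SFT P, Periodic z t ∧ ∀ i : Fin L, z i = y i := by
  have hmod := apply_eq_apply_emod_of_agree ht fun i hi => h ⟨i, hi⟩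
  refine ⟨fun m => y (m % t), mem_SFT_of_forall_window fun m => ⟨y, hy, m % t, fun i => ?_⟩,
    fun m => by simp only [Int.add_emod_right], fun i => (hmod i (by positivity) (by omega)).symm⟩
  rw [hmod _ (add_nonneg (Int.emod_nonneg m ht.ne') (by positivity))
    (by have := Int.emod_lt_of_pos m ht; omega), Int.emod_add_emod]

def IsReturnTime (P : Fin k → Fin L → Fin b) (u : Fin L → Fin b) (t : ℤ) : Prop :=
  ∃ y ∈ SFT P, ∀ i : Fin L, y i = u i ∧ y (t + i) = u i

theorem IsReturnTime.neg {u : Fin L → Fin b} {t : ℤ} (h : IsReturnTime P u t) :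
    IsReturnTime P u (-t) := by
  obtain ⟨y, hy, hu⟩ := h
  refine ⟨shift t y, shift_mem_SFT hy t, fun i => ⟨?_, ?_⟩⟩
  · simp only [shift, add_comm _ t, (hu i).2]
  · simp only [shift, neg_add_cancel_comm, (hu i).1]

theorem exists_periodic_of_isReturnTime {u : Fin L → Fin b} {t : ℤ} (h : IsReturnTime P u t)
    (ht : t ≠ 0) : ∃ z ∈ SFT P, Periodic z t.natAbs ∧ ∀ i : Fin L, z i = u i := by
  wlog ht₀ : 0 < t generalizing t
  · simpa only [Int.natAbs_neg] using this h.neg (neg_ne_zero.mpr ht) (by omega)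
  obtain ⟨y, hy, hu⟩ := h
  obtain ⟨z, hz, hper, hzy⟩ := exists_periodic_of_agree hy ht₀ fun i => (hu i).2.trans (hu i).1.symm
  exact ⟨z, hz, by rwa [Int.natCast_natAbs, abs_of_pos ht₀], fun i => (hzy i).trans (hu i).1⟩

end SFT

section Markers

def listCylinder (c : List (ℤ × Bool)) : Set (ℤ → Bool) := {x | ∀ e ∈ c, x e.1 = e.2}

def IsSeparated (N : ℕ) (S : Set (ℤ → Bool)) : Prop :=
  ∀ x ∈ S, ∀ l : ℤ, l ≠ 0 → |l| ≤ N → shift l x ∉ S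

def separatedPart (N : ℕ) (S : Set (ℤ → Bool)) : Set (ℤ → Bool) :=
  {x ∈ S | ∀ l : ℤ, l ≠ 0 → |l| ≤ N → shift l x ∉ S}

def greedyMarkers (N : ℕ) (A : ℕ → Set (ℤ → Bool)) : ℕ → Set (ℤ → Bool)
  | 0 => ∅
  | i + 1 => greedyMarkers N A i ∪
      (separatedPart N (A i) \ {x | ∃ l : ℤ, |l| ≤ N ∧ shift l x ∈ greedyMarkers N A i})

def markers (N : ℕ) : Set (ℤ → Bool) :=
  ⋃ i, greedyMarkers N (fun j => listCylinder ((Encodable.decode j).getD [])) i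

variable {N : ℕ} {A : ℕ → Set (ℤ → Bool)} {x : ℤ → Bool}

theorem measurableSet_listCylinder (c : List (ℤ × Bool)) : MeasurableSet (listCylinder c) := by
  simp only [listCylinder, Set.ofPred_forall]
  exact .iInter fun e => .iInter fun _ =>
    measurableSet_eq_fun (measurable_pi_apply e.1) measurable_const

theorem measurableSet_separatedPart {S : Set (ℤ → Bool)} (hS : MeasurableSet S) :
    MeasurableSet (separatedPart N S) := by
  change MeasurableSet (S ∩ {x | ∀ l : ℤ, l ≠ 0 → |l| ≤ N → shift l x ∉ S})
  simp only [Set.ofPred_forall]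
  exact hS.inter <| .iInter fun l => .iInter fun _ => .iInter fun _ =>
    (hS.preimage (measurable_shift l)).compl

theorem isSeparated_separatedPart (S : Set (ℤ → Bool)) : IsSeparated N (separatedPart N S) :=
  fun _ hx l hl hlN hlx => hx.2 l hl hlN hlx.1

theorem greedyMarkers_mono : Monotone (greedyMarkers N A) :=
  monotone_nat_of_le_succ fun _ => Set.subset_union_left

theorem measurableSet_greedyMarkers (hA : ∀ i, MeasurableSet (A i)) (i : ℕ) :
    MeasurableSet (greedyMarkers N A i) := by
  induction i with
  | zero => exact .empty
  | succ i ih =>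
    refine ih.union ((measurableSet_separatedPart (hA i)).diff ?_)
    simp only [Set.ofPred_exists, Set.ofPred_and]
    exact .iUnion fun l => (MeasurableSet.const _).inter (ih.preimage (measurable_shift l))

theorem isSeparated_greedyMarkers (i : ℕ) : IsSeparated N (greedyMarkers N A i) := by
  induction i with
  | zero => exact fun x hx => hx.elim
  | succ i ih =>
    rintro x (hx | hx) l hl hlN (hlx | hlx)
    · exact ih x hx l hl hlN hlx
    · exact hlx.2 ⟨-l, by rwa [abs_neg], by rwa [shift_shift, neg_add_cancel, shift_zero]⟩
    · exact hx.2 ⟨l, hlN, hlx⟩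
    · exact isSeparated_separatedPart (A i) x hx.1 l hl hlN hlx.1

theorem IsSeparated.iUnion_of_monotone {M : ℕ → Set (ℤ → Bool)} (hmono : Monotone M)
    (h : ∀ i, IsSeparated N (M i)) : IsSeparated N (⋃ i, M i) := by
  intro x hx l hl hlN hlx
  obtain ⟨i, hi⟩ := Set.mem_iUnion.mp hx
  obtain ⟨j, hj⟩ := Set.mem_iUnion.mp hlx
  exact h (max i j) x (hmono (le_max_left i j) hi) l hl hlN (hmono (le_max_right i j) hj)

theorem exists_shift_mem_greedyMarkers_succ {i : ℕ} (hx : x ∈ separatedPart N (A i)) :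
    ∃ l : ℤ, |l| ≤ N ∧ shift l x ∈ greedyMarkers N A (i + 1) := by
  by_cases h : ∃ l : ℤ, |l| ≤ N ∧ shift l x ∈ greedyMarkers N A i
  · obtain ⟨l, hlN, hl⟩ := h
    exact ⟨l, hlN, Or.inl hl⟩
  · exact ⟨0, by simp, by rw [shift_zero]; exact Or.inr ⟨hx, h⟩⟩

theorem exists_listCylinder_mem_separatedPart (hx : x ∈ FreePart) (N : ℕ) :
    ∃ c, x ∈ separatedPart N (listCylinder c) := by
  choose! m hm using fun l (hl : l ≠ 0) => Function.ne_iff.mp (hx l hl)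
  refine ⟨(Finset.Icc (-(N : ℤ)) N).toList.map fun l => (m l, x (m l)), ?_, ?_⟩
  · simp only [listCylinder, List.forall_mem_map]
    exact fun _ _ => rfl
  · intro l hl hlN hmem
    exact hm l hl (hmem (m l, x (m l)) (List.mem_map.mpr ⟨l, by simp [abs_le.mp hlN], rfl⟩))

theorem measurableSet_markers (N : ℕ) : MeasurableSet (markers N) :=
  .iUnion <| measurableSet_greedyMarkers fun _ => measurableSet_listCylinder _

theorem isSeparated_markers (N : ℕ) : IsSeparated N (markers N) :=
  IsSeparated.iUnion_of_monotone greedyMarkers_mono isSeparated_greedyMarkers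

theorem exists_shift_mem_markers (hx : x ∈ FreePart) :
    ∃ l : ℤ, |l| ≤ N ∧ shift l x ∈ markers N := by
  obtain ⟨c, hc⟩ := exists_listCylinder_mem_separatedPart hx N
  obtain ⟨l, hlN, hl⟩ := exists_shift_mem_greedyMarkers_succ (i := Encodable.encode c)
    (A := fun j => listCylinder ((Encodable.decode j).getD []))
    (by simpa [Encodable.encodek] using hc)
  exact ⟨l, hlN, Set.mem_iUnion.mpr ⟨_, hl⟩⟩

end Markers

section MarkerGaps

variable (N : ℕ) {x : ℤ → Bool}

theorem exists_marker_mem_Icc (hx : x ∈ FreePart) (c : ℤ) :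
    ∃ a, c - N ≤ a ∧ a ≤ c + N ∧ shift a x ∈ markers N := by
  obtain ⟨l, hlN, hl⟩ := exists_shift_mem_markers (N := N) ((shift_mem_freePart_iff c).mpr hx)
  rw [shift_shift] at hl
  exact ⟨l + c, by linarith [neg_abs_le l], by linarith [le_abs_self l], hl⟩

/-- Off the free part the search below stops at once; this makes the search time total, hence
measurable. -/
theorem exists_prevMarker (x : ℤ → Bool) (m : ℤ) :
    ∃ d : ℕ, shift (m - d) x ∈ markers N ∨ x ∉ FreePart := by
  by_cases hx : x ∈ FreePart
  · obtain ⟨a, -, ha, hmem⟩ := exists_marker_mem_Icc N hx (m - N)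
    exact ⟨(m - a).toNat, Or.inl (by rwa [Int.toNat_of_nonneg (by omega), sub_sub_cancel])⟩
  · exact ⟨0, Or.inr hx⟩

theorem exists_nextMarker (x : ℤ → Bool) (m : ℤ) :
    ∃ d : ℕ, shift (m + 1 + d) x ∈ markers N ∨ x ∉ FreePart := by
  by_cases hx : x ∈ FreePart
  · obtain ⟨a, ha, -, hmem⟩ := exists_marker_mem_Icc N hx (m + 1 + N)
    exact ⟨(a - (m + 1)).toNat, Or.inl (by rwa [Int.toNat_of_nonneg (by omega), add_sub_cancel])⟩
  · exact ⟨0, Or.inr hx⟩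

open Classical in
noncomputable def prevMarker (x : ℤ → Bool) (m : ℤ) : ℤ := m - Nat.find (exists_prevMarker N x m)

open Classical in
noncomputable def nextMarker (x : ℤ → Bool) (m : ℤ) : ℤ :=
  m + 1 + Nat.find (exists_nextMarker N x m)

theorem prevMarker_le (x : ℤ → Bool) (m : ℤ) : prevMarker N x m ≤ m := by
  simp only [prevMarker]; omega

theorem lt_nextMarker (x : ℤ → Bool) (m : ℤ) : m < nextMarker N x m := by
  simp only [nextMarker]; omega

theorem prevMarker_mem (hx : x ∈ FreePart) (m : ℤ) : shift (prevMarker N x m) x ∈ markers N := by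
  classical
  exact (Nat.find_spec (exists_prevMarker N x m)).resolve_right (not_not.mpr hx)

theorem nextMarker_mem (hx : x ∈ FreePart) (m : ℤ) : shift (nextMarker N x m) x ∈ markers N := by
  classical
  exact (Nat.find_spec (exists_nextMarker N x m)).resolve_right (not_not.mpr hx)

theorem le_prevMarker {m a : ℤ} (ha : a ≤ m) (hmem : shift a x ∈ markers N) :
    a ≤ prevMarker N x m := by
  classical
  have := Nat.find_min' (exists_prevMarker N x m) (m := (m - a).toNat)
    (Or.inl (by rwa [Int.toNat_of_nonneg (by omega), sub_sub_cancel]))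
  simp only [prevMarker]; omega

theorem nextMarker_le {m a : ℤ} (ha : m < a) (hmem : shift a x ∈ markers N) :
    nextMarker N x m ≤ a := by
  classical
  have := Nat.find_min' (exists_nextMarker N x m) (m := (a - (m + 1)).toNat)
    (Or.inl (by rwa [Int.toNat_of_nonneg (by omega), add_sub_cancel]))
  simp only [nextMarker]; omega

theorem prevMarker_eq_and_nextMarker_eq (hx : x ∈ FreePart) {m m' : ℤ}
    (h₁ : prevMarker N x m ≤ m') (h₂ : m' < nextMarker N x m) :
    prevMarker N x m' = prevMarker N x m ∧ nextMarker N x m' = nextMarker N x m := by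
  have hp := prevMarker_le N x m'
  have hn := lt_nextMarker N x m'
  have hp' : prevMarker N x m' ≤ prevMarker N x m := by
    rcases le_or_gt (prevMarker N x m') m with h | h
    · exact le_prevMarker N h (prevMarker_mem N hx m')
    · have := nextMarker_le N h (prevMarker_mem N hx m'); omega
  have hn' : nextMarker N x m ≤ nextMarker N x m' := by
    rcases lt_or_ge m (nextMarker N x m') with h | h
    · exact nextMarker_le N h (nextMarker_mem N hx m')
    · have := le_prevMarker N h (nextMarker_mem N hx m'); omega
  exact ⟨le_antisymm hp' (le_prevMarker N h₁ (prevMarker_mem N hx m)),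
    le_antisymm (nextMarker_le N h₂ (nextMarker_mem N hx m)) hn'⟩

theorem lt_nextMarker_sub_prevMarker (hx : x ∈ FreePart) (m : ℤ) :
    (N : ℤ) < nextMarker N x m - prevMarker N x m := by
  have hp := prevMarker_le N x m
  have hn := lt_nextMarker N x m
  by_contra! h
  refine isSeparated_markers N _ (prevMarker_mem N hx m) _ (by omega) (abs_le.mpr ⟨by omega, h⟩) ?_
  rw [shift_shift, sub_add_cancel]
  exact nextMarker_mem N hx m

theorem prevMarker_shift (s m : ℤ) : prevMarker N (shift s x) m = prevMarker N x (m + s) - s := by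
  classical
  have : Nat.find (exists_prevMarker N (shift s x) m) = Nat.find (exists_prevMarker N x (m + s)) :=
    Nat.find_congr' fun {d} => by rw [shift_shift, shift_mem_freePart_iff, sub_add_eq_add_sub]
  simp only [prevMarker, this]; ring

theorem nextMarker_shift (s m : ℤ) : nextMarker N (shift s x) m = nextMarker N x (m + s) - s := by
  classical
  have : Nat.find (exists_nextMarker N (shift s x) m) = Nat.find (exists_nextMarker N x (m + s)) :=
    Nat.find_congr' fun {d} => by
      rw [shift_shift, shift_mem_freePart_iff, add_right_comm, add_right_comm m]
  simp only [nextMarker, this]; ring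

theorem measurableSet_shift_mem_markers_or_notMem_freePart (c : ℤ) :
    MeasurableSet {x : ℤ → Bool | shift c x ∈ markers N ∨ x ∉ FreePart} :=
  ((measurableSet_markers N).preimage (measurable_shift c)).union measurableSet_freePart.compl

theorem measurable_prevMarker (m : ℤ) : Measurable fun x => prevMarker N x m := by
  classical
  exact Measurable.find (f := fun d _ => m - d) (fun _ => measurable_const)
    (fun d => measurableSet_shift_mem_markers_or_notMem_freePart N (m - d))
    (exists_prevMarker N · m)

theorem measurable_nextMarker (m : ℤ) : Measurable fun x => nextMarker N x m := by
  classical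
  exact Measurable.find (f := fun d _ => m + 1 + d) (fun _ => measurable_const)
    (fun d => measurableSet_shift_mem_markers_or_notMem_freePart N (m + 1 + d))
    (exists_nextMarker N · m)

end MarkerGaps

section Filling

theorem exists_mul_add_mul_eq {p q g : ℕ} (hpq : Nat.Coprime p q) (hp : 0 < p) (hq : 0 < q)
    (hg : p * q ≤ g) : ∃ k₁ k₂ : ℕ, k₁ * p + k₂ * q = g := by
  rcases Nat.lt_or_ge 1 p with hp₁ | hp₁
  · rcases Nat.lt_or_ge 1 q with hq₁ | hq₁
    · have hmem : g ∈ AddSubmonoid.closure {p, q} := by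
        by_contra h
        have := (frobeniusNumber_pair hpq hp₁ hq₁).2 h
        have := Nat.mul_pos hp hq
        omega
      obtain ⟨k₁, k₂, h⟩ := (AddSubmonoid.mem_closure_pair p q g).mp hmem
      exact ⟨k₁, k₂, by simpa only [smul_eq_mul] using h⟩
    · exact ⟨0, g, by rw [show q = 1 by omega]; ring⟩
  · exact ⟨g, 0, by rw [show p = 1 by omega]; ring⟩

open Classical in
noncomputable def coinRep (p q : ℕ) (g : ℤ) : ℕ × ℕ :=
  if h : ∃ k : ℕ × ℕ, g = k.1 * p + k.2 * q then h.choose else (0, 0)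

theorem coinRep_spec {p q : ℕ} (hpq : Nat.Coprime p q) (hp : 0 < p) (hq : 0 < q) {g : ℤ}
    (hg : (p * q : ℕ) ≤ g) : g = (coinRep p q g).1 * p + (coinRep p q g).2 * q := by
  have h : ∃ k : ℕ × ℕ, g = k.1 * p + k.2 * q := by
    obtain ⟨k₁, k₂, hk⟩ := exists_mul_add_mul_eq hpq hp hq (g := g.toNat) (by omega)
    exact ⟨(k₁, k₂), by rw [← Int.toNat_of_nonneg (by omega : 0 ≤ g), ← hk]; push_cast; rfl⟩
  rw [coinRep, dif_pos h]
  exact h.choose_spec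

variable {b : ℕ}

/-- A block of length `g = k₁ p + k₂ q`: `k₁` periods of `y₁`, then `k₂` periods of `y₂`. -/
noncomputable def blockFill (p q : ℕ) (y₁ y₂ : ℤ → Fin b) (g j : ℤ) : Fin b :=
  if j < (coinRep p q g).1 * p then y₁ j else y₂ (j - (coinRep p q g).1 * p)

noncomputable def fillMap (p q : ℕ) (y₁ y₂ : ℤ → Fin b) (x : ℤ → Bool) (m : ℤ) : Fin b :=
  blockFill p q y₁ y₂ (nextMarker (p * q) x m - prevMarker (p * q) x m) (m - prevMarker (p * q) x m)

variable {p q n : ℕ} {y₁ y₂ : ℤ → Fin b} {x : ℤ → Bool}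

theorem blockFill_of_lt (hnp : n < p) (hagr : ∀ i : ℕ, i < n → y₁ i = y₂ i) (g : ℤ) (i : ℕ)
    (hi : i < n) : blockFill p q y₁ y₂ g i = y₁ i := by
  unfold blockFill
  split_ifs with h
  · rfl
  · have : (coinRep p q g).1 = 0 := by
      by_contra h'
      exact h (by nlinarith [Nat.one_le_iff_ne_zero.mpr h'])
    simp only [this, Nat.cast_zero, zero_mul, sub_zero, hagr i hi]

theorem measurable_fillMap (p q : ℕ) (y₁ y₂ : ℤ → Fin b) : Measurable (fillMap p q y₁ y₂) := by
  refine measurable_pi_lambda _ fun m => ?_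
  change Measurable ((fun e : ℤ × ℤ => blockFill p q y₁ y₂ (e.2 - e.1) (m - e.1)) ∘
    fun x => (prevMarker (p * q) x m, nextMarker (p * q) x m))
  exact (measurable_of_countable _).comp
    ((measurable_prevMarker _ m).prodMk (measurable_nextMarker _ m))

theorem fillMap_shift (s : ℤ) : fillMap p q y₁ y₂ (shift s x) = shift s (fillMap p q y₁ y₂ x) := by
  funext m
  simp only [fillMap, shift, prevMarker_shift, nextMarker_shift, sub_add_cancel,
    sub_sub_eq_add_sub]

end Filling

section FillingWindows

variable {b p q n : ℕ} {y₁ y₂ : ℤ → Fin b} {x : ℤ → Bool}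

/-- `V` is a block of length `g = k₁ p + k₂ q` followed by the common prefix of `y₁` and `y₂`:
every window starting inside the `y₁`-part reads `y₁`, as it can only run into `y₂` or into the
next block within their common prefix. -/
theorem block_apply_eq_left {V : ℤ → Fin b} {g : ℤ} {k₁ k₂ : ℕ} (hg : g = k₁ * p + k₂ * q)
    (hnq : n < q) (h₁ : Periodic y₁ p) (hagr : ∀ i : ℕ, i < n → y₁ i = y₂ i)
    (hblock : ∀ j : ℤ, 0 ≤ j → j < g → V j = if j < k₁ * p then y₁ j else y₂ (j - k₁ * p))
    (hnext : ∀ i : ℕ, i < n → V (g + i) = y₁ i) {j : ℤ} (hj₀ : 0 ≤ j) (hj : j < k₁ * p + n) :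
    V j = y₁ j := by
  rcases lt_or_ge j g with hjg | hjg
  · rw [hblock j hj₀ hjg]
    split_ifs with h
    · rfl
    · obtain ⟨i, hi⟩ : ∃ i : ℕ, j - k₁ * p = i := ⟨(j - k₁ * p).toNat, by omega⟩
      rw [hi, ← hagr i (by omega), ← hi, h₁.sub_nat_mul_eq]
  · have hk₂ : k₂ = 0 := by
      by_contra hk₂
      have : (q : ℤ) ≤ k₂ * q :=
        le_mul_of_one_le_left (by positivity) (by exact_mod_cast Nat.one_le_iff_ne_zero.mpr hk₂)
      omega
    have hg' : g = k₁ * p := by rw [hg, hk₂]; push_cast; ring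
    obtain ⟨i, rfl⟩ : ∃ i : ℕ, j = g + i := ⟨(j - g).toNat, by omega⟩
    rw [hnext i (by omega), hg', add_comm]
    exact (h₁.nat_mul k₁ i).symm

theorem block_apply_eq_right {V : ℤ → Fin b} {g : ℤ} {k₁ k₂ : ℕ} (hg : g = k₁ * p + k₂ * q)
    (h₂ : Periodic y₂ q) (hagr : ∀ i : ℕ, i < n → y₁ i = y₂ i)
    (hblock : ∀ j : ℤ, 0 ≤ j → j < g → V j = if j < k₁ * p then y₁ j else y₂ (j - k₁ * p))
    (hnext : ∀ i : ℕ, i < n → V (g + i) = y₁ i) {j : ℤ} (hj₀ : k₁ * p ≤ j) (hj : j < g + n) :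
    V j = y₂ (j - k₁ * p) := by
  rcases lt_or_ge j g with hjg | hjg
  · rw [hblock j (le_trans (by positivity) hj₀) hjg, if_neg (by omega)]
  · obtain ⟨i, rfl⟩ : ∃ i : ℕ, j = g + i := ⟨(j - g).toNat, by omega⟩
    have hi : i < n := by omega
    rw [hnext i hi, hagr i hi, show g + i - k₁ * p = i + k₂ * q by rw [hg]; ring]
    exact (h₂.nat_mul k₂ i).symm

theorem fillMap_prevMarker_add (hx : x ∈ FreePart) (m : ℤ) {j : ℤ} (hj₀ : 0 ≤ j)
    (hj : j < nextMarker (p * q) x m - prevMarker (p * q) x m) :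
    fillMap p q y₁ y₂ x (prevMarker (p * q) x m + j) =
      blockFill p q y₁ y₂ (nextMarker (p * q) x m - prevMarker (p * q) x m) j := by
  obtain ⟨hprev, hnext⟩ := prevMarker_eq_and_nextMarker_eq (p * q) hx
    (m := m) (m' := prevMarker (p * q) x m + j) (by omega) (by omega)
  simp only [fillMap, hprev, hnext, add_sub_cancel_left]

theorem fillMap_marker_add (hx : x ∈ FreePart) (hnp : n < p) (hnq : n < q)
    (hagr : ∀ i : ℕ, i < n → y₁ i = y₂ i) {e : ℤ} (he : shift e x ∈ markers (p * q)) (i : ℕ)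
    (hi : i < n) : fillMap p q y₁ y₂ x (e + i) = y₁ i := by
  have hprev : prevMarker (p * q) x e = e :=
    le_antisymm (prevMarker_le _ x e) (le_prevMarker _ le_rfl he)
  have hgap := lt_nextMarker_sub_prevMarker (p * q) hx e
  have hpq : p ≤ p * q := Nat.le_mul_of_pos_right p (by omega)
  have := fillMap_prevMarker_add (p := p) (q := q) (y₁ := y₁) (y₂ := y₂) hx e (j := i)
    (by positivity) (by push_cast at hgap; omega)
  rw [hprev] at this
  rw [this, blockFill_of_lt hnp hagr _ i hi]

theorem fillMap_window (hx : x ∈ FreePart) (hpq : Nat.Coprime p q) (hnp : n < p) (hnq : n < q)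
    (h₁ : Periodic y₁ p) (h₂ : Periodic y₂ q) (hagr : ∀ i : ℕ, i < n → y₁ i = y₂ i) (m : ℤ) :
    (∃ c : ℤ, ∀ i : ℕ, i < n → fillMap p q y₁ y₂ x (m + i) = y₁ (c + i)) ∨
      ∃ c : ℤ, ∀ i : ℕ, i < n → fillMap p q y₁ y₂ x (m + i) = y₂ (c + i) := by
  set a := prevMarker (p * q) x m
  set g := nextMarker (p * q) x m - a
  set k₁ := (coinRep p q g).1
  have hgap := lt_nextMarker_sub_prevMarker (p * q) hx m
  have hg : g = k₁ * p + (coinRep p q g).2 * q := coinRep_spec hpq (by omega) (by omega) hgap.le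
  have hblock : ∀ j : ℤ, 0 ≤ j → j < g → fillMap p q y₁ y₂ x (a + j) =
      if j < k₁ * p then y₁ j else y₂ (j - k₁ * p) := fun j hj₀ hj =>
    fillMap_prevMarker_add hx m hj₀ hj
  have hnext : ∀ i : ℕ, i < n → fillMap p q y₁ y₂ x (a + (g + i)) = y₁ i := fun i hi => by
    rw [show a + (g + i) = nextMarker (p * q) x m + i by ring]
    exact fillMap_marker_add hx hnp hnq hagr (nextMarker_mem _ hx m) i hi
  have hr := prevMarker_le (p * q) x m
  have hr' := lt_nextMarker (p * q) x m
  rcases lt_or_ge (m - a) (k₁ * p) with hk | hk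
  · refine Or.inl ⟨m - a, fun i hi => ?_⟩
    rw [← block_apply_eq_left hg hnq h₁ hagr hblock hnext (by omega) (by omega)]
    congr 1; ring
  · refine Or.inr ⟨m - a - k₁ * p, fun i hi => ?_⟩
    rw [show m - a - k₁ * p + i = m - a + i - k₁ * p by ring,
      ← block_apply_eq_right hg h₂ hagr hblock hnext (by omega) (by omega)]
    congr 1; ring

theorem fillMap_mem_SFT {L k : ℕ} {P : Fin k → Fin L → Fin b} (hx : x ∈ FreePart) (hLn : L ≤ n)
    (hnp : n < p) (hnq : n < q) (hpq : Nat.Coprime p q) (hy₁ : y₁ ∈ SFT P) (hy₂ : y₂ ∈ SFT P)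
    (h₁ : Periodic y₁ p) (h₂ : Periodic y₂ q) (hagr : ∀ i : ℕ, i < n → y₁ i = y₂ i) :
    fillMap p q y₁ y₂ x ∈ SFT P := by
  refine mem_SFT_of_forall_window fun m => ?_
  rcases fillMap_window hx hpq hnp hnq h₁ h₂ hagr m with ⟨c, hc⟩ | ⟨c, hc⟩
  · exact ⟨y₁, hy₁, c, fun i => hc i (by omega)⟩
  · exact ⟨y₂, hy₂, c, fun i => hc i (by omega)⟩

end FillingWindows

section Rotation

variable {a : AddCircle (1 : ℝ)}

theorem ergodic_add_zsmul (ha : addOrderOf a = 0) {s : ℤ} (hs : s ≠ 0) :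
    Ergodic (· + s • a) volume := by
  have hinj : ∀ i : ℤ, i • a = 0 → i = 0 := fun i hi => by
    rwa [← addOrderOf_dvd_iff_zsmul_eq_zero, ha, Nat.cast_zero, zero_dvd_iff] at hi
  refine AddCircle.ergodic_add_right.mpr (addOrderOf_eq_zero_iff'.mpr fun n hn h => hs ?_)
  rw [← natCast_zsmul, smul_smul] at h
  exact (mul_eq_zero.mp (hinj _ h)).resolve_left (by omega)

theorem exists_modEq_inter_preimage_add_zsmul_nonempty (ha : addOrderOf a = 0)
    {C : Set (AddCircle (1 : ℝ))} (hC : MeasurableSet C) (hC₀ : volume C ≠ 0) {d : ℤ}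
    (hd : d ≠ 0) (r : ℤ) : ∃ t, t ≡ r [ZMOD d] ∧ (C ∩ (· + t • a) ⁻¹' C).Nonempty := by
  set D := ⋃ j : ℤ, (· + (j * d + r) • a) ⁻¹' C
  have hDm : MeasurableSet D := .iUnion fun j => hC.preimage (measurable_add_const _)
  have hstep : ∀ (j : ℤ) (z : AddCircle (1 : ℝ)),
      z + d • a + (j * d + r) • a = z + ((j + 1) * d + r) • a :=
    fun j z => by rw [add_assoc, ← add_zsmul]; ring_nf
  have hDinv : (· + d • a) ⁻¹' D = D := by
    ext z
    simp only [D, Set.mem_preimage, Set.mem_iUnion, hstep]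
    exact ⟨fun ⟨j, hj⟩ => ⟨j + 1, hj⟩, fun ⟨j, hj⟩ => ⟨j - 1, by rwa [sub_add_cancel]⟩⟩
  have hD₀ : volume D ≠ 0 := fun h => hC₀ <| by
    simpa [measure_preimage_add_right] using measure_mono_null (Set.subset_iUnion _ 0) h
  have hDc : volume Dᶜ = 0 := by
    rcases (ergodic_add_zsmul ha hd).ae_empty_or_univ hDm hDinv with h | h
    · exact absurd (ae_eq_empty.mp h) hD₀
    · exact ae_eq_univ.mp h
  have hCD : volume (⋃ j : ℤ, C ∩ (· + (j * d + r) • a) ⁻¹' C) ≠ 0 := by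
    rw [← Set.inter_iUnion]
    refine fun h => hC₀ (measure_mono_null (fun z hz => ?_) (measure_union_null h hDc))
    by_cases hzD : z ∈ D
    exacts [Or.inl ⟨hz, hzD⟩, Or.inr hzD]
  obtain ⟨j, hj⟩ := not_forall.mp (mt measure_iUnion_null_iff.mpr hCD)
  exact ⟨j * d + r, Int.modEq_iff_dvd.mpr ⟨-j, by ring⟩, nonempty_of_measure_ne_zero hj⟩

open Classical in
noncomputable def itinerary (a : AddCircle (1 : ℝ)) (I : Set (AddCircle (1 : ℝ)))
    (z : AddCircle (1 : ℝ)) : ℤ → Bool :=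
  fun m => decide (z + m • a ∈ I)

variable {I : Set (AddCircle (1 : ℝ))}

theorem itinerary_add_zsmul (z : AddCircle (1 : ℝ)) (s : ℤ) :
    itinerary a I (z + s • a) = shift s (itinerary a I z) := by
  funext m
  simp only [itinerary, shift]
  rw [add_zsmul, add_assoc, add_comm (m • a)]

theorem measurable_itinerary (hI : MeasurableSet I) : Measurable (itinerary a I) := by
  refine measurable_pi_lambda _ fun m => measurable_to_countable' fun v => ?_
  have hJ := hI.preimage (measurable_add_const (m • a))
  cases v
  · convert hJ.compl using 1; ext z; simp [itinerary]
  · convert hJ using 1; ext z; simp [itinerary]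

theorem ae_itinerary_mem_freePart (ha : addOrderOf a = 0) (hI : MeasurableSet I)
    (hI₀ : volume I ≠ 0) (hIc : volume Iᶜ ≠ 0) : ∀ᵐ z, itinerary a I z ∈ FreePart := by
  refine ae_all_iff.mpr fun s => ?_
  rcases eq_or_ne s 0 with rfl | hs
  · exact .of_forall fun _ h => absurd rfl h
  set B := {z | shift s (itinerary a I z) = itinerary a I z}
  have hBm : MeasurableSet B :=
    measurableSet_eq_fun ((measurable_shift s).comp (measurable_itinerary hI))
      (measurable_itinerary hI)
  have hBinv : ∀ z, z + s • a ∈ B ↔ z ∈ B := fun z => by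
    simp only [B, Set.mem_ofPred_eq, itinerary_add_zsmul, (shift_injective s).eq_iff]
  have hBI : ∀ z ∈ B, z + s • a ∈ I ↔ z ∈ I := fun z hz => by
    simpa [itinerary, shift] using congrFun hz 0
  -- On `B` the rotation by `s • a` preserves `I`, so ergodicity leaves no room for `B`.
  have hnull : ∀ J, MeasurableSet J → (∀ z ∈ B, z + s • a ∈ J ↔ z ∈ J) → volume Jᶜ ≠ 0 →
      volume (B ∩ J) = 0 := fun J hJ hBJ hJc => by
    have hinv : (· + s • a) ⁻¹' (B ∩ J) = B ∩ J := by
      ext z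
      exact ⟨fun ⟨h₁, h₂⟩ => ⟨(hBinv z).mp h₁, (hBJ z ((hBinv z).mp h₁)).mp h₂⟩,
        fun ⟨h₁, h₂⟩ => ⟨(hBinv z).mpr h₁, (hBJ z h₁).mpr h₂⟩⟩
    refine ae_eq_empty.mp <| ((ergodic_add_zsmul ha hs).ae_empty_or_univ (hBm.inter hJ)
      hinv).resolve_right fun h => hJc (measure_mono_null ?_ (ae_eq_univ.mp h))
    exact Set.compl_subset_compl.mpr Set.inter_subset_right
  have hB : volume B = 0 := by
    refine measure_mono_null (fun z hz => ?_) (measure_union_null (hnull I hI hBI hIc)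
      (hnull Iᶜ hI.compl (fun z hz => not_congr (hBI z hz)) (by rwa [compl_compl])))
    by_cases hzI : z ∈ I
    exacts [Or.inl ⟨hz, hzI⟩, Or.inr ⟨hz, hzI⟩]
  filter_upwards [measure_eq_zero_iff_ae_notMem.mp hB] with z hz _ using hz

end Rotation

section Forward

variable {b L k : ℕ} {P : Fin k → Fin L → Fin b}

def wordSet {Y : Set (ℤ → Fin b)} (f : {x : ℤ → Bool // x ∈ FreePart} → {y : ℤ → Fin b // y ∈ Y})
    (u : Fin L → Fin b) : Set (ℤ → Bool) :=
  {x | ∃ h : x ∈ FreePart, ∀ i : Fin L, (f ⟨x, h⟩ : ℤ → Fin b) i = u i}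

theorem measurableSet_wordSet {Y : Set (ℤ → Fin b)}
    {f : {x : ℤ → Bool // x ∈ FreePart} → {y : ℤ → Fin b // y ∈ Y}} (hf : Measurable f)
    (u : Fin L → Fin b) : MeasurableSet (wordSet f u) := by
  have hS : MeasurableSet {y : {y // y ∈ Y} | ∀ i : Fin L, (y : ℤ → Fin b) i = u i} := by
    simp only [Set.ofPred_forall]
    exact .iInter fun i =>
      measurableSet_eq_fun ((measurable_pi_apply _).comp measurable_subtype_coe) measurable_const
  convert measurableSet_freePart.subtype_image (hS.preimage hf) using 1
  ext x
  simp [wordSet]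

theorem iUnion_wordSet {Y : Set (ℤ → Fin b)}
    (f : {x : ℤ → Bool // x ∈ FreePart} → {y : ℤ → Fin b // y ∈ Y}) :
    ⋃ u : Fin L → Fin b, wordSet f u = FreePart := by
  ext x
  simp only [Set.mem_iUnion]
  exact ⟨fun ⟨_, h, _⟩ => h, fun h => ⟨fun i => (f ⟨x, h⟩ : ℤ → Fin b) i, h, fun _ => rfl⟩⟩

theorem isReturnTime_of_mem_wordSet
    {f : {x : ℤ → Bool // x ∈ FreePart} → {y : ℤ → Fin b // y ∈ SFT P}}
    (hequiv : EquivariantOn (SFT P) f) {u : Fin L → Fin b} {x : ℤ → Bool} {t : ℤ}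
    (hx : x ∈ wordSet f u) (htx : shift t x ∈ wordSet f u) : IsReturnTime P u t := by
  obtain ⟨h, hu⟩ := hx
  obtain ⟨h', hu'⟩ := htx
  refine ⟨f ⟨x, h⟩, (f ⟨x, h⟩).2, fun i => ⟨hu i, ?_⟩⟩
  have := hu' i
  rwa [hequiv ⟨x, h⟩ t h', shift, add_comm] at this

theorem addOrderOf_coe_sqrt_two : addOrderOf ((√2 : ℝ) : AddCircle (1 : ℝ)) = 0 := by
  rw [addOrderOf_eq_zero_iff, AddCircle.isOfFinAddOrder_iff_exists_rat_eq_div, div_one]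
  rintro ⟨r, hr⟩
  exact irrational_sqrt_two ⟨r, hr⟩

theorem exists_forall_modEq_isReturnTime
    {f : {x : ℤ → Bool // x ∈ FreePart} → {y : ℤ → Fin b // y ∈ SFT P}} (hf : Measurable f)
    (hequiv : EquivariantOn (SFT P) f) :
    ∃ u : Fin L → Fin b, ∀ d r : ℤ, d ≠ 0 → ∃ t, t ≡ r [ZMOD d] ∧ IsReturnTime P u t := by
  set a : AddCircle (1 : ℝ) := ((√2 : ℝ) : AddCircle (1 : ℝ))
  set I : Set (AddCircle (1 : ℝ)) := Metric.closedBall 0 (1 / 4)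
  have hI : MeasurableSet I := measurableSet_closedBall
  have hvol : volume I = ENNReal.ofReal (1 / 2) := by
    rw [AddCircle.volume_closedBall]; norm_num
  have hI₀ : volume I ≠ 0 := by rw [hvol]; norm_num
  have hIc : volume Iᶜ ≠ 0 := by
    rw [measure_compl hI (measure_ne_top _ _), AddCircle.measure_univ, hvol,
      ← ENNReal.ofReal_sub _ (by norm_num)]
    norm_num
  have hfree := ae_itinerary_mem_freePart addOrderOf_coe_sqrt_two hI hI₀ hIc
  obtain ⟨u, hu⟩ : ∃ u : Fin L → Fin b, volume (itinerary a I ⁻¹' wordSet f u) ≠ 0 := by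
    by_contra! h
    have hnull : volume (itinerary a I ⁻¹' FreePart) = 0 := by
      rw [← iUnion_wordSet f, Set.preimage_iUnion]
      exact measure_iUnion_null h
    obtain ⟨z, hz, hz'⟩ := (hfree.and (measure_eq_zero_iff_ae_notMem.mp hnull)).exists
    exact hz' hz
  refine ⟨u, fun d r hd => ?_⟩
  obtain ⟨t, ht, z, hz, hzt⟩ := exists_modEq_inter_preimage_add_zsmul_nonempty
    addOrderOf_coe_sqrt_two ((measurableSet_wordSet hf u).preimage (measurable_itinerary hI))
    hu hd r
  refine ⟨t, ht, isReturnTime_of_mem_wordSet hequiv hz ?_⟩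
  rw [← itinerary_add_zsmul]
  exact hzt

theorem exists_periodic_points_of_forall_modEq_isReturnTime {u : Fin L → Fin b}
    (hu : ∀ d r : ℤ, d ≠ 0 → ∃ t, t ≡ r [ZMOD d] ∧ IsReturnTime P u t) :
    ∃ p q : ℕ, L < p ∧ L < q ∧ Nat.gcd p q = 1 ∧ ∃ y₁ ∈ SFT P, ∃ y₂ ∈ SFT P,
      Periodic y₁ p ∧ Periodic y₂ q ∧ ∀ i : ℕ, i < L → y₁ i = y₂ i := by
  obtain ⟨t₁, ht₁, hr₁⟩ := hu 2 1 two_ne_zero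
  have ht₁₀ : t₁ ≠ 0 := by rintro rfl; exact absurd ht₁ (by decide)
  obtain ⟨y₁, hy₁, hper₁, hu₁⟩ := exists_periodic_of_isReturnTime hr₁ ht₁₀
  set p := (L + 1) * t₁.natAbs
  have hp : L < p := Nat.lt_of_lt_of_le (Nat.lt_succ_self L)
    (Nat.le_mul_of_pos_right _ (Int.natAbs_pos.mpr ht₁₀))
  -- `t₂ ≡ 1 mod 2p` makes `t₂` nonzero and coprime to `p`.
  obtain ⟨t₂, ht₂, hr₂⟩ := hu (2 * p) 1 (by omega)
  obtain ⟨c, hc⟩ := Int.modEq_iff_dvd.mp ht₂.symm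
  have ht₂₀ : t₂ ≠ 0 := by rintro rfl; rw [mul_assoc] at hc; omega
  obtain ⟨y₂, hy₂, hper₂, hu₂⟩ := exists_periodic_of_isReturnTime hr₂ ht₂₀
  have hcop : Nat.Coprime p t₂.natAbs := by
    have : IsCoprime (p : ℤ) t₂ := ⟨-(2 * c), 1, by linear_combination hc⟩
    exact Int.isCoprime_iff_gcd_eq_one.mp this
  refine ⟨p, (p + 1) * t₂.natAbs, hp, ?_, ?_, y₁, hy₁, y₂, hy₂, ?_, ?_,
    fun i hi => (hu₁ ⟨i, hi⟩).trans (hu₂ ⟨i, hi⟩).symm⟩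
  · exact Nat.lt_of_lt_of_le (hp.trans (Nat.lt_succ_self p))
      (Nat.le_mul_of_pos_right _ (Int.natAbs_pos.mpr ht₂₀))
  · exact Nat.Coprime.mul_right (Nat.coprime_self_add_right.mpr (Nat.coprime_one_right p)) hcop
  · exact_mod_cast hper₁.nat_mul (L + 1)
  · exact_mod_cast hper₂.nat_mul (p + 1)

end Forward

theorem borel_equivariant_map_iff_two_periodic_points_general
    (b L k : ℕ) (P : Fin k → Fin L → Fin b) :
    (∃ f : {x : ℤ → Bool // x ∈ FreePart} → {y : ℤ → Fin b // y ∈ SFT P},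
       Measurable f ∧ EquivariantOn (SFT P) f) ↔
    (∃ n p q : ℕ, L ≤ n ∧ n < p ∧ n < q ∧ Nat.gcd p q = 1 ∧
      ∃ y₁ ∈ SFT P, ∃ y₂ ∈ SFT P,
        (∀ m : ℤ, y₁ (m + (p : ℤ)) = y₁ m) ∧
        (∀ m : ℤ, y₂ (m + (q : ℤ)) = y₂ m) ∧
        (∀ i : ℕ, i < n → y₁ (i : ℤ) = y₂ (i : ℤ))) := by
  constructor
  · rintro ⟨f, hf, hequiv⟩
    obtain ⟨u, hu⟩ := exists_forall_modEq_isReturnTime hf hequiv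
    obtain ⟨p, q, hp, hq, hpq, y₁, hy₁, y₂, hy₂, h₁, h₂, hagr⟩ :=
      exists_periodic_points_of_forall_modEq_isReturnTime hu
    exact ⟨L, p, q, le_rfl, hp, hq, hpq, y₁, hy₁, y₂, hy₂, h₁, h₂, hagr⟩
  · rintro ⟨n, p, q, hLn, hnp, hnq, hpq, y₁, hy₁, y₂, hy₂, h₁, h₂, hagr⟩
    exact ⟨fun x => ⟨fillMap p q y₁ y₂ x, fillMap_mem_SFT x.2 hLn hnp hnq hpq hy₁ hy₂ h₁ h₂ hagr⟩,
      (measurable_fillMap p q y₁ y₂).comp measurable_subtype_coe |>.subtype_mk,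
      fun _ s _ => fillMap_shift s⟩

/-- There is a Borel equivariant map `F(2^ℤ) → Y` iff there are
`n, p, q` with `L ≤ n < p, q`, `gcd(p,q) = 1`, and points `y₁, y₂ ∈ Y` of periods
`p` and `q` respectively that agree on `[0, n)`. -/
theorem borel_equivariant_map_iff_two_periodic_points
    (b L k : ℕ) (hb : 1 ≤ b) (hL : 1 ≤ L) (P : Fin k → Fin L → Fin b) :
    (∃ f : {x : ℤ → Bool // x ∈ FreePart} → {y : ℤ → Fin b // y ∈ SFT P},
       Measurable f ∧ EquivariantOn (SFT P) f) ↔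
    (∃ n p q : ℕ, L ≤ n ∧ n < p ∧ n < q ∧ Nat.gcd p q = 1 ∧
      ∃ y₁ ∈ SFT P, ∃ y₂ ∈ SFT P,
        (∀ m : ℤ, y₁ (m + (p : ℤ)) = y₁ m) ∧
        (∀ m : ℤ, y₂ (m + (q : ℤ)) = y₂ m) ∧
        (∀ i : ℕ, i < n → y₁ (i : ℤ) = y₂ (i : ℤ))) :=
  borel_equivariant_map_iff_two_periodic_points_general b L k P
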